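/- arXiv:1109.4453 — 3 statements merged into one kernel-verified Lean document; each statement's English description precedes it below -/
import Mathlib

section
/- Every thrackle of the complete bipartite graph K_{s,t} (in the standard convex embedding) is acyclic as a graph. -/
/-- Edges of `K_{s,t}` modeled as pairs in `Fin s × Fin t`; two edges intersect in the
standard convex embedding iff neither is strictly nested in the same direction. -/
def FCrosses {s t : ℕ} (e f : Fin s × Fin t) : Prop :=
  ¬(e.1 < f.1 ∧ e.2 < f.2) ∧ ¬(f.1 < e.1 ∧ f.2 < e.2)

/-- A thrackle: every pair of edges intersects. -/
def FIsThrackle {s t : ℕ} (H : Finset (Fin s × Fin t)) : Prop :=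
  ∀ e ∈ H, ∀ f ∈ H, FCrosses e f

/-- The edge set covers all left and right vertices. -/
def FIsSpanning {s t : ℕ} (H : Finset (Fin s × Fin t)) : Prop :=
  (∀ i : Fin s, ∃ j, (i, j) ∈ H) ∧ (∀ j : Fin t, ∃ i, (i, j) ∈ H)

/-- The bipartite simple graph on `Fin s ⊕ Fin t` determined by an edge set `H`. -/
def bipGraph {s t : ℕ} (H : Finset (Fin s × Fin t)) : SimpleGraph (Fin s ⊕ Fin t) where
  Adj x y := (∃ p ∈ H, x = Sum.inl p.1 ∧ y = Sum.inr p.2) ∨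
             (∃ p ∈ H, y = Sum.inl p.1 ∧ x = Sum.inr p.2)
  symm := ⟨fun x y h => h.symm⟩
  loopless := ⟨by
    intro x h
    rcases h with ⟨p, _, h1, h2⟩ | ⟨p, _, h1, h2⟩ <;> subst h1 <;> simp at h2⟩

/-!
Let `i` be the topmost left vertex on a cycle. Its two cycle edges go to right vertices
`j < j'`, and the second cycle edge at `j` goes to a left vertex `i' ≠ i` of the cycle,
so `i' < i`. Then the edge `(i', j)` lies strictly below `(i, j')` in both coordinates:
these two edges do not cross.
-/

open Sum

namespace SimpleGraph.Walk.IsCycle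

variable {V : Type*} {G : SimpleGraph V} {u : V} {c : G.Walk u u}

theorem exists_mem_edges_ne (hc : c.IsCycle) {x : V} (hx : x ∈ c.support) (z : V) :
    ∃ y ≠ z, s(x, y) ∈ c.edges := by
  obtain ⟨y, hy, hyz⟩ :=
    Set.exists_ne_of_one_lt_ncard (by rw [hc.ncard_neighborSet_toSubgraph_eq_two hx]; norm_num) z
  exact ⟨y, hyz, adj_toSubgraph_iff_mem_edges.mp hy⟩

end SimpleGraph.Walk.IsCycle

namespace bipGraph

variable {s t : ℕ} {H : Finset (Fin s × Fin t)} {u : Fin s ⊕ Fin t}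
  {c : (bipGraph H).Walk u u}

theorem adj_inl_iff {i : Fin s} {x : Fin s ⊕ Fin t} :
    (bipGraph H).Adj (inl i) x ↔ ∃ j, (i, j) ∈ H ∧ x = inr j := by
  simp [bipGraph]

theorem adj_inr_iff {j : Fin t} {x : Fin s ⊕ Fin t} :
    (bipGraph H).Adj (inr j) x ↔ ∃ i, (i, j) ∈ H ∧ x = inl i := by
  simp [bipGraph]

theorem exists_inl_mem_support (hc : c.IsCycle) : ∃ i, inl i ∈ c.support := by
  cases u with
  | inl i => exact ⟨i, c.start_mem_support⟩
  | inr j =>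
    obtain ⟨x, -, hxc⟩ := hc.exists_mem_edges_ne c.start_mem_support (inr j)
    obtain ⟨i, -, rfl⟩ := adj_inr_iff.mp (c.adj_of_mem_edges hxc)
    exact ⟨i, c.snd_mem_support_of_mem_edges hxc⟩

theorem exists_max_inl_mem_support (hc : c.IsCycle) :
    ∃ i, inl i ∈ c.support ∧ ∀ i', inl i' ∈ c.support → i' ≤ i := by
  classical
  obtain ⟨i₀, hi₀⟩ := exists_inl_mem_support hc
  obtain ⟨i, hi, hmax⟩ := Finset.exists_max_image ({i | inl i ∈ c.support} : Finset (Fin s)) id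
    ⟨i₀, by simpa using hi₀⟩
  exact ⟨i, by simpa using hi, fun i' hi' => hmax i' (by simpa using hi')⟩

theorem exists_lt_of_inl_mem_support (hc : c.IsCycle) {i : Fin s} (hi : inl i ∈ c.support) :
    ∃ j j', j < j' ∧ s(inl i, inr j) ∈ c.edges ∧ (i, j') ∈ H := by
  obtain ⟨x, -, hx⟩ := hc.exists_mem_edges_ne hi (inl i)
  obtain ⟨j, hj, rfl⟩ := adj_inl_iff.mp (c.adj_of_mem_edges hx)
  obtain ⟨y, hyj, hy⟩ := hc.exists_mem_edges_ne hi (inr j)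
  obtain ⟨j', hj', rfl⟩ := adj_inl_iff.mp (c.adj_of_mem_edges hy)
  rcases lt_or_gt_of_ne (fun h : j = j' => hyj (h ▸ rfl)) with hlt | hlt
  · exact ⟨j, j', hlt, hx, hj'⟩
  · exact ⟨j', j, hlt, hy, hj⟩

theorem exists_inl_ne_of_mem_edges (hc : c.IsCycle) {i : Fin s} {j : Fin t}
    (he : s(inl i, inr j) ∈ c.edges) :
    ∃ i' ≠ i, inl i' ∈ c.support ∧ (i', j) ∈ H := by
  obtain ⟨x, hxi, hx⟩ := hc.exists_mem_edges_ne (c.snd_mem_support_of_mem_edges he) (inl i)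
  obtain ⟨i', hi', rfl⟩ := adj_inr_iff.mp (c.adj_of_mem_edges hx)
  exact ⟨i', fun h => hxi (h ▸ rfl), c.snd_mem_support_of_mem_edges hx, hi'⟩

end bipGraph

/-- Every thrackle of `K_{s,t}` is acyclic as a graph. -/
theorem thrackle_acyclic (s t : ℕ) (H : Finset (Fin s × Fin t)) (hH : FIsThrackle H) :
    (bipGraph H).IsAcyclic := by
  intro u c hc
  obtain ⟨i, hi, hmax⟩ := bipGraph.exists_max_inl_mem_support hc
  obtain ⟨j, j', hjj', hij, hij'⟩ := bipGraph.exists_lt_of_inl_mem_support hc hi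
  obtain ⟨i', hi'i, hi', hi'j⟩ := bipGraph.exists_inl_ne_of_mem_edges hc hij
  exact (hH _ hi'j _ hij').1 ⟨lt_of_le_of_ne (hmax i' hi') hi'i, hjj'⟩
end

section
/- Let H be a spanning thrackle of K_{s,t} in the standard convex embedding. If (i, j1) and (i, j2) are edges of H with j1 < j2, then for every j with j1 ≤ j ≤ j2, the edge (i, j) is also in H. That is, the set of right-neighbors of each left vertex in H is an interval. -/
/-! Some edge `(k, j)` covers the right vertex `j`. If `k ≠ i`, that edge lies strictly on one
side of `i`, and crossing `(i, j₂)` (when `k < i`) or `(i, j₁)` (when `i < k`) pins `j` to that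
endpoint. -/

/-- Edges `e = (i,j)` and `f = (k,l)` of `K_{s,t}` (1-based labels) intersect
in the standard convex embedding iff neither is strictly "parallel below" the other. -/
def Crosses (e f : ℕ × ℕ) : Prop :=
  ¬(e.1 < f.1 ∧ e.2 < f.2) ∧ ¬(f.1 < e.1 ∧ f.2 < e.2)

/-- `H` is a thrackle of `K_{s,t}`: a set of edges `(i,j)`, `1 ≤ i ≤ s`, `1 ≤ j ≤ t`,
any two of which intersect (or share a vertex). -/
def IsThrackle (s t : ℕ) (H : Finset (ℕ × ℕ)) : Prop :=
  (∀ e ∈ H, 1 ≤ e.1 ∧ e.1 ≤ s ∧ 1 ≤ e.2 ∧ e.2 ≤ t) ∧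
    ∀ e ∈ H, ∀ f ∈ H, Crosses e f

/-- A spanning thrackle covers every left vertex and every right vertex. -/
def IsSpanningThrackle (s t : ℕ) (H : Finset (ℕ × ℕ)) : Prop :=
  IsThrackle s t H ∧ (∀ i, 1 ≤ i → i ≤ s → ∃ j, (i, j) ∈ H) ∧
    (∀ j, 1 ≤ j → j ≤ t → ∃ i, (i, j) ∈ H)

theorem Crosses.snd_le_of_fst_lt {e f : ℕ × ℕ} (h : Crosses e f) (hlt : e.1 < f.1) :
    f.2 ≤ e.2 :=
  not_lt.1 fun h' => h.1 ⟨hlt, h'⟩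

theorem mem_of_pairwise_crosses_of_le_of_le {H : Finset (ℕ × ℕ)}
    (hcross : ∀ e ∈ H, ∀ f ∈ H, Crosses e f) {i j₁ j₂ j k : ℕ}
    (h₁ : (i, j₁) ∈ H) (h₂ : (i, j₂) ∈ H) (hk : (k, j) ∈ H) (hj₁ : j₁ ≤ j) (hj₂ : j ≤ j₂) :
    (i, j) ∈ H := by
  rcases lt_trichotomy k i with hki | rfl | hik
  · have hj₂' : j₂ ≤ j := (hcross _ hk _ h₂).snd_le_of_fst_lt hki
    rwa [le_antisymm hj₂ hj₂']
  · exact hk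
  · have hj₁' : j ≤ j₁ := (hcross _ h₁ _ hk).snd_le_of_fst_lt hik
    rwa [le_antisymm hj₁' hj₁]

/-- In a spanning thrackle the right-neighborhood of each left vertex is an interval. -/
theorem spanningThrackle_interval (s t : ℕ) (H : Finset (ℕ × ℕ))
    (hH : IsSpanningThrackle s t H) (i j₁ j₂ j : ℕ)
    (h₁ : (i, j₁) ∈ H) (h₂ : (i, j₂) ∈ H) (hj₁ : j₁ ≤ j) (hj₂ : j ≤ j₂) :
    (i, j) ∈ H := by
  obtain ⟨⟨hbound, hcross⟩, -, hcover⟩ := hH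
  obtain ⟨k, hk⟩ :=
    hcover j ((hbound _ h₁).2.2.1.trans hj₁) (hj₂.trans (hbound _ h₂).2.2.2)
  exact mem_of_pairwise_crosses_of_le_of_le hcross h₁ h₂ hk hj₁ hj₂
end

section
/- Let H be a thrackle of K_{s,t} in the standard convex embedding containing edges (i,j1) and (i,j2) with j1+1 < j2. Then for any left vertex k ≠ i and any right vertex l with j1 < l < j2, the edge (k,l) fails to intersect at least one edge of H; hence H ∪ {(k,l)} is not a thrackle. -/
theorem not_crosses_of_lt {e f : ℕ × ℕ} (h₁ : e.1 < f.1) (h₂ : e.2 < f.2) : ¬Crosses e f :=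
  fun hc => hc.1 ⟨h₁, h₂⟩

theorem Crosses.symm {e f : ℕ × ℕ} (h : Crosses e f) : Crosses f e :=
  ⟨h.2, h.1⟩

theorem not_crosses_or_not_crosses_of_between {i j₁ j₂ k l : ℕ} (hki : k ≠ i) (hl₁ : j₁ < l)
    (hl₂ : l < j₂) : ¬Crosses (k, l) (i, j₁) ∨ ¬Crosses (k, l) (i, j₂) := by
  rcases hki.lt_or_gt with hlt | hgt
  · exact .inr (not_crosses_of_lt hlt hl₂)
  · exact .inl fun hc => not_crosses_of_lt hgt hl₁ hc.symm

theorem not_isThrackle_insert_of_not_crosses {s t : ℕ} {H : Finset (ℕ × ℕ)} {x e : ℕ × ℕ}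
    (he : e ∈ H) (hx : ¬Crosses x e) : ¬IsThrackle s t (insert x H) :=
  fun hT => hx (hT.2 x (Finset.mem_insert_self x H) e (Finset.mem_insert_of_mem he))

theorem thrackle_no_new_edge_general (s t : ℕ) (H : Finset (ℕ × ℕ))
    (i j₁ j₂ k l : ℕ) (h₁ : (i, j₁) ∈ H) (h₂ : (i, j₂) ∈ H)
    (hki : k ≠ i) (hl₁ : j₁ < l) (hl₂ : l < j₂) :
    (∃ e ∈ H, ¬Crosses (k, l) e) ∧ ¬IsThrackle s t (insert (k, l) H) := by
  obtain ⟨e, he, hne⟩ : ∃ e ∈ H, ¬Crosses (k, l) e := by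
    rcases not_crosses_or_not_crosses_of_between hki hl₁ hl₂ with h | h
    exacts [⟨_, h₁, h⟩, ⟨_, h₂, h⟩]
  exact ⟨⟨e, he, hne⟩, not_isThrackle_insert_of_not_crosses he hne⟩

/-- If a thrackle `H` contains `(i,j₁)` and `(i,j₂)` with `j₁ + 1 < j₂`, then any edge
`(k,l)` with `k ≠ i` and `j₁ < l < j₂` fails to cross some edge of `H`; hence
`H ∪ {(k,l)}` is not a thrackle. -/
theorem thrackle_no_new_edge (s t : ℕ) (H : Finset (ℕ × ℕ)) (hH : IsThrackle s t H)
    (i j₁ j₂ k l : ℕ) (h₁ : (i, j₁) ∈ H) (h₂ : (i, j₂) ∈ H) (hj : j₁ + 1 < j₂)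
    (hk₁ : 1 ≤ k) (hk₂ : k ≤ s) (hki : k ≠ i) (hl₁ : j₁ < l) (hl₂ : l < j₂) :
    (∃ e ∈ H, ¬Crosses (k, l) e) ∧ ¬IsThrackle s t (insert (k, l) H) :=
  thrackle_no_new_edge_general s t H i j₁ j₂ k l h₁ h₂ hki hl₁ hl₂
end
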